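/- arXiv:1912.05789 — 5 statements merged into one kernel-verified Lean document; each statement's English description precedes it below -/
import Mathlib

section
/- Let Ω be a bounded Lipschitz domain, u ∈ H¹(Ω) the weak solution of Δu = 0 with u|_Γ = g ∈ H^{1/2}(Γ), and v ∈ H¹(Ω) harmonic. Then ‖∇(u−v)‖²_{L²(Ω)} = max over τ ∈ H(div,Ω) with div τ = 0 of (2⟨g − v|_Γ, τ·n|_Γ⟩_Γ − ‖τ‖²_{L²(Ω)}), where ⟨·,·⟩_Γ denotes the H^{1/2}(Γ)×H^{−1/2}(Γ) duality pairing; the unique maximizer is τ = ∇(u−v). -/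
/-!
Integration by parts against a divergence-free `τ` turns the boundary pairing
`⟨g − v|_Γ, τ·n⟩_Γ = ⟨(u − v)|_Γ, τ·n⟩_Γ` into `⟪∇(u − v), τ⟫`, and completing the square gives
`2⟪∇(u − v), τ⟫ − ‖τ‖² = ‖∇(u − v)‖² − ‖∇(u − v) − τ‖²`.
-/

open scoped RealInnerProductSpace

section CompletingSquare

variable {E : Type*} [NormedAddCommGroup E] [InnerProductSpace ℝ E]

theorem two_inner_sub_norm_sq_eq (e t : E) :
    2 * ⟪e, t⟫ - ‖t‖ ^ 2 = ‖e‖ ^ 2 - ‖e - t‖ ^ 2 := by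
  rw [norm_sub_sq_real]
  ring

theorem two_inner_sub_norm_sq_le (e t : E) : 2 * ⟪e, t⟫ - ‖t‖ ^ 2 ≤ ‖e‖ ^ 2 := by
  rw [two_inner_sub_norm_sq_eq]
  exact sub_le_self _ (sq_nonneg _)

theorem eq_of_two_inner_sub_norm_sq_eq {e t : E} (h : 2 * ⟪e, t⟫ - ‖t‖ ^ 2 = ‖e‖ ^ 2) :
    t = e := by
  rw [two_inner_sub_norm_sq_eq, sub_eq_self, sq_eq_zero_iff, norm_eq_zero, sub_eq_zero] at h
  exact h.symm

end CompletingSquare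

theorem stmt4_general
    {V L2v L2 Ht Hm Hd : Type*}
    [AddCommGroup V] [Module ℝ V]
    [NormedAddCommGroup L2v] [InnerProductSpace ℝ L2v]
    [NormedAddCommGroup L2] [InnerProductSpace ℝ L2]
    [AddCommGroup Ht] [Module ℝ Ht] [AddCommGroup Hm] [Module ℝ Hm]
    [AddCommGroup Hd] [Module ℝ Hd]
    (grad : V →ₗ[ℝ] L2v) (emb : V →ₗ[ℝ] L2) (tr : V →ₗ[ℝ] Ht)
    (toL2v : Hd →ₗ[ℝ] L2v) (dvg : Hd →ₗ[ℝ] L2) (ntr : Hd →ₗ[ℝ] Hm)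
    (pair : Ht →ₗ[ℝ] Hm →ₗ[ℝ] ℝ)
    (hIBP : ∀ (w : V) (σ : Hd),
      ⟪grad w, toL2v σ⟫ = pair (tr w) (ntr σ) - ⟪emb w, dvg σ⟫)
    (u v : V) (g : Ht) (hg : tr u = g)
    (τ0 : Hd) (hτ0 : toL2v τ0 = grad (u - v)) (hτ0d : dvg τ0 = 0) :
    IsGreatest
      {x : ℝ | ∃ τ : Hd, dvg τ = 0 ∧ x = 2 * pair (g - tr v) (ntr τ) - ‖toL2v τ‖ ^ 2}
      (‖grad (u - v)‖ ^ 2) ∧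
    (∀ τ : Hd, dvg τ = 0 →
      2 * pair (g - tr v) (ntr τ) - ‖toL2v τ‖ ^ 2 = ‖grad (u - v)‖ ^ 2 →
      toL2v τ = grad (u - v)) := by
  have hpair : ∀ τ : Hd, dvg τ = 0 → pair (g - tr v) (ntr τ) = ⟪grad (u - v), toL2v τ⟫ := by
    intro τ hτ
    rw [hIBP, hτ, inner_zero_right, sub_zero, map_sub tr, hg]
  refine ⟨⟨⟨τ0, hτ0d, ?_⟩, ?_⟩, fun τ hτ h => ?_⟩
  · rw [hpair τ0 hτ0d, hτ0, real_inner_self_eq_norm_sq]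
    ring
  · rintro x ⟨τ, hτ, rfl⟩
    rw [hpair τ hτ]
    exact two_inner_sub_norm_sq_le _ _
  · rw [hpair τ hτ] at h
    exact eq_of_two_inner_sub_norm_sq_eq h

/-- Abstract Sobolev setting: `V = H¹(Ω)`, `L2v = L²(Ω;ℝ^d)`, `L2 = L²(Ω)`,
`Ht = H^{1/2}(Γ)`, `Hm = H^{−1/2}(Γ)`, `Hd = H(div,Ω)`.
`grad` is the weak gradient, `emb` the embedding `H¹(Ω) ⊂ L²(Ω)`, `tr` the trace,
`toL2v` the embedding `H(div,Ω) ⊂ L²(Ω;ℝ^d)`, `dvg` the divergence,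
`ntr` the normal trace `σ ↦ σ·n|_Γ`, and `pair` the `H^{1/2}×H^{−1/2}` duality pairing.
`hIBP` is the integration-by-parts formula
`⟪∇w, σ⟫_{L²} = ⟨w|_Γ, σ·n⟩_Γ − ⟪w, div σ⟫_{L²}` defining the normal trace.
`τ0` realizes the fact that `∇(u−v) ∈ H(div,Ω)` with `div ∇(u−v) = 0` for harmonic `u−v`.

Statement: `‖∇(u−v)‖²_{L²(Ω)} = max { 2⟨g − v|_Γ, τ·n⟩_Γ − ‖τ‖²_{L²(Ω)} : τ ∈ H(div,Ω),
div τ = 0 }` and the unique maximizer is `τ = ∇(u−v)`. -/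
theorem stmt4
    {V L2v L2 Ht Hm Hd : Type*}
    [AddCommGroup V] [Module ℝ V]
    [NormedAddCommGroup L2v] [InnerProductSpace ℝ L2v]
    [NormedAddCommGroup L2] [InnerProductSpace ℝ L2]
    [AddCommGroup Ht] [Module ℝ Ht] [AddCommGroup Hm] [Module ℝ Hm]
    [AddCommGroup Hd] [Module ℝ Hd]
    (grad : V →ₗ[ℝ] L2v) (emb : V →ₗ[ℝ] L2) (tr : V →ₗ[ℝ] Ht)
    (toL2v : Hd →ₗ[ℝ] L2v) (dvg : Hd →ₗ[ℝ] L2) (ntr : Hd →ₗ[ℝ] Hm)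
    (pair : Ht →ₗ[ℝ] Hm →ₗ[ℝ] ℝ)
    (hIBP : ∀ (w : V) (σ : Hd),
      ⟪grad w, toL2v σ⟫ = pair (tr w) (ntr σ) - ⟪emb w, dvg σ⟫)
    (u v : V) (g : Ht) (hg : tr u = g)
    (hu : ∀ φ : V, tr φ = 0 → ⟪grad u, grad φ⟫ = 0)
    (hv : ∀ φ : V, tr φ = 0 → ⟪grad v, grad φ⟫ = 0)
    (τ0 : Hd) (hτ0 : toL2v τ0 = grad (u - v)) (hτ0d : dvg τ0 = 0) :
    IsGreatest
      {x : ℝ | ∃ τ : Hd, dvg τ = 0 ∧ x = 2 * pair (g - tr v) (ntr τ) - ‖toL2v τ‖ ^ 2}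
      (‖grad (u - v)‖ ^ 2) ∧
    (∀ τ : Hd, dvg τ = 0 →
      2 * pair (g - tr v) (ntr τ) - ‖toL2v τ‖ ^ 2 = ‖grad (u - v)‖ ^ 2 →
      toL2v τ = grad (u - v)) :=
  stmt4_general grad emb tr toL2v dvg ntr pair hIBP u v g hg τ0 hτ0 hτ0d
end

section
/- Let Ω be a bounded Lipschitz domain, u harmonic with trace g, and v harmonic. For every τ ∈ H(div,Ω) with div τ = 0, one has the guaranteed lower bound 2⟨g − v|_Γ, τ·n|_Γ⟩_Γ − ‖τ‖²_{L²(Ω)} ≤ ‖∇(u−v)‖²_{L²(Ω)}. -/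
open scoped RealInnerProductSpace

theorem two_mul_inner_sub_norm_sq_le {E : Type*} [NormedAddCommGroup E] [InnerProductSpace ℝ E]
    (a b : E) : 2 * ⟪a, b⟫ - ‖b‖ ^ 2 ≤ ‖a‖ ^ 2 := by
  have h := norm_sub_sq_real a b
  nlinarith [sq_nonneg ‖a - b‖]

theorem stmt5_general
    {V L2v L2 Ht Hm Hd : Type*}
    [AddCommGroup V] [Module ℝ V]
    [NormedAddCommGroup L2v] [InnerProductSpace ℝ L2v]
    [NormedAddCommGroup L2] [InnerProductSpace ℝ L2]
    [AddCommGroup Ht] [Module ℝ Ht] [AddCommGroup Hm] [Module ℝ Hm]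
    [AddCommGroup Hd] [Module ℝ Hd]
    (grad : V →ₗ[ℝ] L2v) (emb : V →ₗ[ℝ] L2) (tr : V →ₗ[ℝ] Ht)
    (toL2v : Hd →ₗ[ℝ] L2v) (dvg : Hd →ₗ[ℝ] L2) (ntr : Hd →ₗ[ℝ] Hm)
    (pair : Ht →ₗ[ℝ] Hm →ₗ[ℝ] ℝ)
    (hIBP : ∀ (w : V) (σ : Hd),
      ⟪grad w, toL2v σ⟫ = pair (tr w) (ntr σ) - ⟪emb w, dvg σ⟫)
    (u v : V) (g : Ht) (hg : tr u = g) :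
    ∀ τ : Hd, dvg τ = 0 →
      2 * pair (g - tr v) (ntr τ) - ‖toL2v τ‖ ^ 2 ≤ ‖grad (u - v)‖ ^ 2 := by
  intro τ hτ
  have green : pair (g - tr v) (ntr τ) = ⟪grad (u - v), toL2v τ⟫ := by
    rw [hIBP, hτ, inner_zero_right, sub_zero, map_sub tr, hg]
  rw [green]
  exact two_mul_inner_sub_norm_sq_le _ _

/-- Abstract Sobolev setting (see the functional a posteriori error identity):
`V = H¹(Ω)`, `L2v = L²(Ω;ℝ^d)`, `L2 = L²(Ω)`, `Ht = H^{1/2}(Γ)`, `Hm = H^{−1/2}(Γ)`,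
`Hd = H(div,Ω)`; `grad`, `emb`, `tr`, `toL2v`, `dvg`, `ntr`, `pair` as usual, with the
integration-by-parts formula `hIBP` defining the normal trace.

Statement: for `u, v` weakly harmonic with `u|_Γ = g`, every divergence-free
`τ ∈ H(div,Ω)` gives the guaranteed lower bound
`2⟨g − v|_Γ, τ·n⟩_Γ − ‖τ‖²_{L²(Ω)} ≤ ‖∇(u−v)‖²_{L²(Ω)}`. -/
theorem stmt5
    {V L2v L2 Ht Hm Hd : Type*}
    [AddCommGroup V] [Module ℝ V]
    [NormedAddCommGroup L2v] [InnerProductSpace ℝ L2v]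
    [NormedAddCommGroup L2] [InnerProductSpace ℝ L2]
    [AddCommGroup Ht] [Module ℝ Ht] [AddCommGroup Hm] [Module ℝ Hm]
    [AddCommGroup Hd] [Module ℝ Hd]
    (grad : V →ₗ[ℝ] L2v) (emb : V →ₗ[ℝ] L2) (tr : V →ₗ[ℝ] Ht)
    (toL2v : Hd →ₗ[ℝ] L2v) (dvg : Hd →ₗ[ℝ] L2) (ntr : Hd →ₗ[ℝ] Hm)
    (pair : Ht →ₗ[ℝ] Hm →ₗ[ℝ] ℝ)
    (hIBP : ∀ (w : V) (σ : Hd),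
      ⟪grad w, toL2v σ⟫ = pair (tr w) (ntr σ) - ⟪emb w, dvg σ⟫)
    (u v : V) (g : Ht) (hg : tr u = g)
    (hu : ∀ φ : V, tr φ = 0 → ⟪grad u, grad φ⟫ = 0)
    (hv : ∀ φ : V, tr φ = 0 → ⟪grad v, grad φ⟫ = 0) :
    ∀ τ : Hd, dvg τ = 0 →
      2 * pair (g - tr v) (ntr τ) - ‖toL2v τ‖ ^ 2 ≤ ‖grad (u - v)‖ ^ 2 :=
  stmt5_general grad emb tr toL2v dvg ntr pair hIBP u v g hg
end

section
/- Let Ω ⊂ ℝ², u harmonic with trace g, v harmonic, and let w̃ ∈ H¹(Ω) be arbitrary. Then 2⟨g − v|_Γ, n·(curl w̃)|_Γ⟩_Γ − ‖∇w̃‖²_{L²(Ω)} ≤ ‖∇(u−v)‖²_{L²(Ω)}, where n·(curl w̃)|_Γ ∈ H^{−1/2}(Γ) is the normal trace of the divergence-free field curl w̃ = (−∂₂w̃, ∂₁w̃). -/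
open scoped RealInnerProductSpace

theorem pair_trace_normalTrace_of_dvg_eq_zero
    {V L2v L2 Ht Hm Hd : Type*}
    [AddCommGroup V] [Module ℝ V]
    [NormedAddCommGroup L2v] [InnerProductSpace ℝ L2v]
    [NormedAddCommGroup L2] [InnerProductSpace ℝ L2]
    [AddCommGroup Ht] [Module ℝ Ht] [AddCommGroup Hm] [Module ℝ Hm]
    [AddCommGroup Hd] [Module ℝ Hd]
    {grad : V →ₗ[ℝ] L2v} {emb : V →ₗ[ℝ] L2} {tr : V →ₗ[ℝ] Ht}
    {toL2v : Hd →ₗ[ℝ] L2v} {dvg : Hd →ₗ[ℝ] L2} {ntr : Hd →ₗ[ℝ] Hm}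
    {pair : Ht →ₗ[ℝ] Hm →ₗ[ℝ] ℝ}
    (hIBP : ∀ (w : V) (σ : Hd),
      ⟪grad w, toL2v σ⟫ = pair (tr w) (ntr σ) - ⟪emb w, dvg σ⟫)
    (w : V) {σ : Hd} (hσ : dvg σ = 0) :
    pair (tr w) (ntr σ) = ⟪grad w, toL2v σ⟫ := by
  rw [hIBP, hσ, inner_zero_right, sub_zero]

theorem stmt12_general
    {V L2v L2 Ht Hm Hd : Type*}
    [AddCommGroup V] [Module ℝ V]
    [NormedAddCommGroup L2v] [InnerProductSpace ℝ L2v]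
    [NormedAddCommGroup L2] [InnerProductSpace ℝ L2]
    [AddCommGroup Ht] [Module ℝ Ht] [AddCommGroup Hm] [Module ℝ Hm]
    [AddCommGroup Hd] [Module ℝ Hd]
    (grad : V →ₗ[ℝ] L2v) (emb : V →ₗ[ℝ] L2) (tr : V →ₗ[ℝ] Ht)
    (toL2v : Hd →ₗ[ℝ] L2v) (dvg : Hd →ₗ[ℝ] L2) (ntr : Hd →ₗ[ℝ] Hm)
    (pair : Ht →ₗ[ℝ] Hm →ₗ[ℝ] ℝ)
    (hIBP : ∀ (w : V) (σ : Hd),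
      ⟪grad w, toL2v σ⟫ = pair (tr w) (ntr σ) - ⟪emb w, dvg σ⟫)
    (curl : V →ₗ[ℝ] Hd)
    (hcdiv : ∀ w : V, dvg (curl w) = 0)
    (hcnorm : ∀ w : V, ‖toL2v (curl w)‖ = ‖grad w‖)
    (u v : V) (g : Ht) (hg : tr u = g)
    (w : V) :
    2 * pair (g - tr v) (ntr (curl w)) - ‖grad w‖ ^ 2 ≤ ‖grad (u - v)‖ ^ 2 := by
  have hpair : pair (g - tr v) (ntr (curl w)) = ⟪grad (u - v), toL2v (curl w)⟫ := by
    rw [← hg, ← map_sub, pair_trace_normalTrace_of_dvg_eq_zero hIBP _ (hcdiv w)]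
  rw [hpair, ← hcnorm w]
  exact two_mul_inner_sub_norm_sq_le _ _

/-- Abstract Sobolev setting for `Ω ⊆ ℝ²`: `V = H¹(Ω)`, `L2v = L²(Ω;ℝ²)`, `L2 = L²(Ω)`,
`Ht = H^{1/2}(Γ)`, `Hm = H^{−1/2}(Γ)`, `Hd = H(div,Ω)`; `grad`, `emb`, `tr`, `toL2v`,
`dvg`, `ntr`, `pair` as usual with the integration-by-parts formula `hIBP`.
`curl : V → Hd` is the 2D vector curl `w ↦ (−∂₂w, ∂₁w)`, which is divergence-free
(`hcdiv`) and satisfies `‖curl w‖_{L²} = ‖∇w‖_{L²}` (`hcnorm`).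

Statement: for `u, v` weakly harmonic with `u|_Γ = g` and arbitrary `w̃ ∈ H¹(Ω)`,
`2⟨g − v|_Γ, n·(curl w̃)⟩_Γ − ‖∇w̃‖²_{L²(Ω)} ≤ ‖∇(u−v)‖²_{L²(Ω)}`. -/
theorem stmt12
    {V L2v L2 Ht Hm Hd : Type*}
    [AddCommGroup V] [Module ℝ V]
    [NormedAddCommGroup L2v] [InnerProductSpace ℝ L2v]
    [NormedAddCommGroup L2] [InnerProductSpace ℝ L2]
    [AddCommGroup Ht] [Module ℝ Ht] [AddCommGroup Hm] [Module ℝ Hm]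
    [AddCommGroup Hd] [Module ℝ Hd]
    (grad : V →ₗ[ℝ] L2v) (emb : V →ₗ[ℝ] L2) (tr : V →ₗ[ℝ] Ht)
    (toL2v : Hd →ₗ[ℝ] L2v) (dvg : Hd →ₗ[ℝ] L2) (ntr : Hd →ₗ[ℝ] Hm)
    (pair : Ht →ₗ[ℝ] Hm →ₗ[ℝ] ℝ)
    (hIBP : ∀ (w : V) (σ : Hd),
      ⟪grad w, toL2v σ⟫ = pair (tr w) (ntr σ) - ⟪emb w, dvg σ⟫)
    (curl : V →ₗ[ℝ] Hd)
    (hcdiv : ∀ w : V, dvg (curl w) = 0)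
    (hcnorm : ∀ w : V, ‖toL2v (curl w)‖ = ‖grad w‖)
    (u v : V) (g : Ht) (hg : tr u = g)
    (hu : ∀ φ : V, tr φ = 0 → ⟪grad u, grad φ⟫ = 0)
    (hv : ∀ φ : V, tr φ = 0 → ⟪grad v, grad φ⟫ = 0)
    (w : V) :
    2 * pair (g - tr v) (ntr (curl w)) - ‖grad w‖ ^ 2 ≤ ‖grad (u - v)‖ ^ 2 :=
  stmt12_general grad emb tr toL2v dvg ntr pair hIBP curl hcdiv hcnorm u v g hg w
end

section
/- Let Ω be a bounded Lipschitz domain, u harmonic with trace g, v harmonic. Suppose (τ, ω) ∈ H(div,Ω) × L²(Ω) solves the mixed problem: ⟨τ,σ⟩_{L²} + ⟨div σ, ω⟩_{L²} = ⟨g − v|_Γ, σ·n|_Γ⟩_Γ for all σ ∈ H(div,Ω), and ⟨div τ, ψ⟩_{L²} = 0 for all ψ ∈ L²(Ω). Then ω ∈ H¹(Ω) with ∇ω = τ, Δω = 0 weakly, ω|_Γ = g − v|_Γ, and hence ω = u − v and τ = ∇(u−v). -/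
open scoped RealInnerProductSpace

/-!
The first mixed equation, tested with fields of vanishing normal trace, says that `τ` is the
distributional gradient of `ω`, so `ω` lies in `H¹(Ω)` with `∇ω = τ`. The second equation makes
`τ` divergence free, and integrating by parts against zero-trace functions shows that `ω` is
weakly harmonic. Testing the first equation with arbitrary fields and integrating by parts
leaves `⟨ω|_Γ − (g − v|_Γ), σ·n⟩_Γ = 0`, which forces the trace by surjectivity of the normal
trace and nondegeneracy of the pairing. Finally `ω` and `u − v` are weakly harmonic with the same
trace, so their difference `φ` has `‖∇φ‖² = 0` and zero trace, hence vanishes.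
-/

section MixedProblem

variable {V L2v L2 Ht Hm Hd : Type*}
  [AddCommGroup V] [Module ℝ V] [NormedAddCommGroup L2v] [InnerProductSpace ℝ L2v]
  [NormedAddCommGroup L2] [InnerProductSpace ℝ L2]
  [AddCommGroup Ht] [Module ℝ Ht] [AddCommGroup Hm] [Module ℝ Hm]
  [AddCommGroup Hd] [Module ℝ Hd]

def IsWeaklyHarmonic (grad : V →ₗ[ℝ] L2v) (tr : V →ₗ[ℝ] Ht) (w : V) : Prop :=
  ∀ φ : V, tr φ = 0 → ⟪grad w, grad φ⟫ = 0

theorem IsWeaklyHarmonic.sub {grad : V →ₗ[ℝ] L2v} {tr : V →ₗ[ℝ] Ht} {w₁ w₂ : V}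
    (h₁ : IsWeaklyHarmonic grad tr w₁) (h₂ : IsWeaklyHarmonic grad tr w₂) :
    IsWeaklyHarmonic grad tr (w₁ - w₂) := fun φ hφ => by
  rw [map_sub, inner_sub_left, h₁ φ hφ, h₂ φ hφ, sub_zero]

theorem IsWeaklyHarmonic.eq_of_trace_eq {grad : V →ₗ[ℝ] L2v} {tr : V →ₗ[ℝ] Ht}
    (hker : ∀ φ : V, tr φ = 0 → grad φ = 0 → φ = 0) {w₁ w₂ : V}
    (h₁ : IsWeaklyHarmonic grad tr w₁) (h₂ : IsWeaklyHarmonic grad tr w₂)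
    (htr : tr w₁ = tr w₂) : w₁ = w₂ := by
  have hφ : tr (w₁ - w₂) = 0 := by rw [map_sub, htr, sub_self]
  have hgrad : grad (w₁ - w₂) = 0 := inner_self_eq_zero.mp ((h₁.sub h₂) _ hφ)
  exact sub_eq_zero.mp (hker _ hφ hgrad)

theorem inner_grad_eq_zero_of_trace_eq_zero_of_dvg_eq_zero
    {grad : V →ₗ[ℝ] L2v} {emb : V →ₗ[ℝ] L2} {tr : V →ₗ[ℝ] Ht}
    {toL2v : Hd →ₗ[ℝ] L2v} {dvg : Hd →ₗ[ℝ] L2} {ntr : Hd →ₗ[ℝ] Hm}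
    {pair : Ht →ₗ[ℝ] Hm →ₗ[ℝ] ℝ}
    (hIBP : ∀ (w : V) (σ : Hd),
      ⟪grad w, toL2v σ⟫ = pair (tr w) (ntr σ) - ⟪emb w, dvg σ⟫)
    {χ : V} (hχ : tr χ = 0) {τ : Hd} (hτ : dvg τ = 0) :
    ⟪grad χ, toL2v τ⟫ = 0 := by
  rw [hIBP, hχ, hτ, map_zero, LinearMap.zero_apply, inner_zero_right, sub_zero]

theorem eq_of_pair_normalTrace_eq {ntr : Hd →ₗ[ℝ] Hm} {pair : Ht →ₗ[ℝ] Hm →ₗ[ℝ] ℝ}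
    (hntrSurj : Function.Surjective ntr)
    (hpair : ∀ f : Ht, (∀ m : Hm, pair f m = 0) → f = 0) {a b : Ht}
    (h : ∀ σ : Hd, pair a (ntr σ) = pair b (ntr σ)) : a = b := by
  refine sub_eq_zero.mp (hpair _ fun m => ?_)
  obtain ⟨σ, rfl⟩ := hntrSurj m
  rw [map_sub, LinearMap.sub_apply, h, sub_self]

end MixedProblem

/-- Abstract Sobolev setting: `V = H¹(Ω)`, `L2v = L²(Ω;ℝ^d)`, `L2 = L²(Ω)`,
`Ht = H^{1/2}(Γ)`, `Hm = H^{−1/2}(Γ)`, `Hd = H(div,Ω)`, with operators `grad`, `emb`,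
`tr`, `toL2v`, `dvg`, `ntr`, `pair` and:
* `hIBP`: integration by parts `⟪∇w, σ⟫ = ⟨w|_Γ, σ·n⟩_Γ − ⟪w, div σ⟫`;
* `hntrSurj`: surjectivity of the normal trace `H(div,Ω) → H^{−1/2}(Γ)`;
* `hpair`: nondegeneracy of the `H^{1/2}×H^{−1/2}` duality pairing;
* `hker`: Friedrichs property (zero trace and zero gradient imply zero);
* `hmax`: an `L²` function whose distributional gradient (tested against `H(div)` fields
  with vanishing normal trace) lies in `L²` belongs to `H¹(Ω)`.

Statement: if `(τ, ω) ∈ H(div,Ω) × L²(Ω)` solves the mixed problem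
`⟪τ,σ⟫ + ⟪div σ, ω⟫ = ⟨g − v|_Γ, σ·n⟩_Γ` for all `σ`, and `⟪div τ, ψ⟫ = 0` for all `ψ`,
then `ω ∈ H¹(Ω)` with `∇ω = τ`, `Δω = 0` weakly, `ω|_Γ = g − v|_Γ`, and hence
`ω = u − v` and `τ = ∇(u−v)`. -/
theorem stmt15
    {V L2v L2 Ht Hm Hd : Type*}
    [AddCommGroup V] [Module ℝ V]
    [NormedAddCommGroup L2v] [InnerProductSpace ℝ L2v]
    [NormedAddCommGroup L2] [InnerProductSpace ℝ L2]
    [AddCommGroup Ht] [Module ℝ Ht] [AddCommGroup Hm] [Module ℝ Hm]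
    [AddCommGroup Hd] [Module ℝ Hd]
    (grad : V →ₗ[ℝ] L2v) (emb : V →ₗ[ℝ] L2) (tr : V →ₗ[ℝ] Ht)
    (toL2v : Hd →ₗ[ℝ] L2v) (dvg : Hd →ₗ[ℝ] L2) (ntr : Hd →ₗ[ℝ] Hm)
    (pair : Ht →ₗ[ℝ] Hm →ₗ[ℝ] ℝ)
    (hIBP : ∀ (w : V) (σ : Hd),
      ⟪grad w, toL2v σ⟫ = pair (tr w) (ntr σ) - ⟪emb w, dvg σ⟫)
    (hntrSurj : Function.Surjective ntr)
    (hpair : ∀ f : Ht, (∀ m : Hm, pair f m = 0) → f = 0)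
    (hker : ∀ φ : V, tr φ = 0 → grad φ = 0 → φ = 0)
    (hmax : ∀ (w : L2) (gw : L2v),
      (∀ σ : Hd, ntr σ = 0 → ⟪gw, toL2v σ⟫ = - ⟪w, dvg σ⟫) →
      ∃ ω' : V, emb ω' = w ∧ grad ω' = gw)
    (u v : V) (g : Ht) (hg : tr u = g)
    (hu : ∀ φ : V, tr φ = 0 → ⟪grad u, grad φ⟫ = 0)
    (hv : ∀ φ : V, tr φ = 0 → ⟪grad v, grad φ⟫ = 0)
    (τ : Hd) (ω : L2)
    (hmix1 : ∀ σ : Hd, ⟪toL2v τ, toL2v σ⟫ + ⟪dvg σ, ω⟫ = pair (g - tr v) (ntr σ))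
    (hmix2 : ∀ ψ : L2, ⟪dvg τ, ψ⟫ = 0) :
    ∃ ω' : V, emb ω' = ω ∧ grad ω' = toL2v τ ∧
      (∀ χ : V, tr χ = 0 → ⟪grad ω', grad χ⟫ = 0) ∧
      tr ω' = g - tr v ∧ ω' = u - v ∧ toL2v τ = grad (u - v) := by
  obtain ⟨ω', hemb, hgrad⟩ := hmax ω (toL2v τ) fun σ hσ => by
    have h := hmix1 σ
    rw [hσ, map_zero, real_inner_comm ω] at h
    linarith
  have hdvg : dvg τ = 0 := inner_self_eq_zero.mp (hmix2 _)
  have hharm : IsWeaklyHarmonic grad tr ω' := fun χ hχ => by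
    rw [hgrad, real_inner_comm]
    exact inner_grad_eq_zero_of_trace_eq_zero_of_dvg_eq_zero hIBP hχ hdvg
  have htr : tr ω' = g - tr v := eq_of_pair_normalTrace_eq hntrSurj hpair fun σ => by
    have h := hIBP ω' σ
    rw [hgrad, hemb, real_inner_comm (dvg σ)] at h
    linarith [hmix1 σ]
  have heq : ω' = u - v :=
    hharm.eq_of_trace_eq hker (IsWeaklyHarmonic.sub hu hv) (by rw [htr, map_sub, hg])
  exact ⟨ω', hemb, hgrad, hharm, htr, heq, by rw [← hgrad, heq]⟩
end

section
/- Let Ω be a bounded Lipschitz domain, u harmonic with trace g, and v harmonic. Combining the guaranteed bounds, for every divergence-free τ ∈ H(div,Ω) and every w ∈ H¹(Ω) with w|_Γ = g − v|_Γ, one has 2⟨g − v|_Γ, τ·n|_Γ⟩_Γ − ‖τ‖²_{L²(Ω)} ≤ ‖∇(u−v)‖²_{L²(Ω)} ≤ ‖∇w‖²_{L²(Ω)}, so these computable quantities form a guaranteed two-sided interval for the potential error. -/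
/-!
The error `e = u - v` is weakly harmonic, so it is `L²`-orthogonal in gradient to every
function with zero trace. Hence among all `w` with the trace of `e`, `e` minimises the
Dirichlet energy (Pythagoras). Conversely, for divergence-free `τ` integration by parts
turns `⟪∇e, τ⟫` into the boundary pairing `⟨g − v|_Γ, τ·n⟩_Γ`, and
`0 ≤ ‖∇e − τ‖²` gives the lower bound.
-/

open scoped RealInnerProductSpace

section InnerProduct

variable {E : Type*} [NormedAddCommGroup E] [InnerProductSpace ℝ E]

theorem two_mul_inner_sub_norm_sq_le_norm_sq (x y : E) :
    2 * ⟪x, y⟫ - ‖y‖ ^ 2 ≤ ‖x‖ ^ 2 := by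
  nlinarith [norm_sub_sq_real x y, sq_nonneg ‖x - y‖]

theorem norm_sq_le_norm_add_sq_of_inner_eq_zero {x z : E} (h : ⟪x, z⟫ = 0) :
    ‖x‖ ^ 2 ≤ ‖x + z‖ ^ 2 := by
  rw [norm_add_sq_real, h]
  nlinarith [sq_nonneg ‖z‖]

end InnerProduct

section Dirichlet

variable {V L2v Ht : Type*} [AddCommGroup V] [Module ℝ V]
  [NormedAddCommGroup L2v] [InnerProductSpace ℝ L2v] [AddCommGroup Ht] [Module ℝ Ht]
  (grad : V →ₗ[ℝ] L2v) (tr : V →ₗ[ℝ] Ht)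

theorem inner_grad_sub_eq_zero_of_weakly_harmonic {u v : V}
    (hu : ∀ φ : V, tr φ = 0 → ⟪grad u, grad φ⟫ = 0)
    (hv : ∀ φ : V, tr φ = 0 → ⟪grad v, grad φ⟫ = 0) (φ : V) (hφ : tr φ = 0) :
    ⟪grad (u - v), grad φ⟫ = 0 := by
  rw [map_sub, inner_sub_left, hu φ hφ, hv φ hφ, sub_zero]

theorem norm_grad_sq_le_of_weakly_harmonic {e w : V}
    (he : ∀ φ : V, tr φ = 0 → ⟪grad e, grad φ⟫ = 0) (hw : tr w = tr e) :
    ‖grad e‖ ^ 2 ≤ ‖grad w‖ ^ 2 := by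
  have horth : ⟪grad e, grad (w - e)⟫ = 0 := he _ (by rw [map_sub, hw, sub_self])
  simpa [← map_add] using norm_sq_le_norm_add_sq_of_inner_eq_zero horth

end Dirichlet

/-- Abstract Sobolev setting: `V = H¹(Ω)`, `L2v = L²(Ω;ℝ^d)`, `L2 = L²(Ω)`,
`Ht = H^{1/2}(Γ)`, `Hm = H^{−1/2}(Γ)`, `Hd = H(div,Ω)`, with `grad`, `emb`, `tr`,
`toL2v`, `dvg`, `ntr`, `pair` as usual and the integration-by-parts formula `hIBP`.

Statement (guaranteed two-sided bounds): for `u, v` weakly harmonic with `u|_Γ = g`,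
every divergence-free `τ ∈ H(div,Ω)` and every `w ∈ H¹(Ω)` with `w|_Γ = g − v|_Γ` satisfy
`2⟨g − v|_Γ, τ·n⟩_Γ − ‖τ‖²_{L²(Ω)} ≤ ‖∇(u−v)‖²_{L²(Ω)} ≤ ‖∇w‖²_{L²(Ω)}`. -/
theorem stmt16
    {V L2v L2 Ht Hm Hd : Type*}
    [AddCommGroup V] [Module ℝ V]
    [NormedAddCommGroup L2v] [InnerProductSpace ℝ L2v]
    [NormedAddCommGroup L2] [InnerProductSpace ℝ L2]
    [AddCommGroup Ht] [Module ℝ Ht] [AddCommGroup Hm] [Module ℝ Hm]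
    [AddCommGroup Hd] [Module ℝ Hd]
    (grad : V →ₗ[ℝ] L2v) (emb : V →ₗ[ℝ] L2) (tr : V →ₗ[ℝ] Ht)
    (toL2v : Hd →ₗ[ℝ] L2v) (dvg : Hd →ₗ[ℝ] L2) (ntr : Hd →ₗ[ℝ] Hm)
    (pair : Ht →ₗ[ℝ] Hm →ₗ[ℝ] ℝ)
    (hIBP : ∀ (w : V) (σ : Hd),
      ⟪grad w, toL2v σ⟫ = pair (tr w) (ntr σ) - ⟪emb w, dvg σ⟫)
    (u v : V) (g : Ht) (hg : tr u = g)
    (hu : ∀ φ : V, tr φ = 0 → ⟪grad u, grad φ⟫ = 0)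
    (hv : ∀ φ : V, tr φ = 0 → ⟪grad v, grad φ⟫ = 0)
    (τ : Hd) (hτ : dvg τ = 0)
    (w : V) (hw : tr w = g - tr v) :
    2 * pair (g - tr v) (ntr τ) - ‖toL2v τ‖ ^ 2 ≤ ‖grad (u - v)‖ ^ 2 ∧
    ‖grad (u - v)‖ ^ 2 ≤ ‖grad w‖ ^ 2 := by
  have htr : tr (u - v) = g - tr v := by rw [map_sub, hg]
  have hpair : ⟪grad (u - v), toL2v τ⟫ = pair (g - tr v) (ntr τ) := by
    rw [hIBP, hτ, inner_zero_right, sub_zero, htr]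
  constructor
  · rw [← hpair]
    exact two_mul_inner_sub_norm_sq_le_norm_sq _ _
  · exact norm_grad_sq_le_of_weakly_harmonic grad tr
      (inner_grad_sub_eq_zero_of_weakly_harmonic grad tr hu hv) (hw.trans htr.symm)
end
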